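/- Let g be a uniformly Lipschitz generator. Then the following two conditions are equivalent. (a) There exists a constant C > 0 such that for all t ∈ [0,T], all λ ∈ [0,1], all y, y¹, y² ∈ ℝⁿ and all z, z¹, z² ∈ ℝ^{n×d}: −4⟨y⁻, λ·g(t,y¹,z¹) + (1−λ)·g(t,y²,z²) − g(t, λy¹ + (1−λ)y² − y⁺, z)⟩ ≤ 2·∑_{k=1}^{n} 1_{y_k<0}·|λz¹_k + (1−λ)z²_k − z_k|² + C·|y⁻|². (b) For every k ∈ {1,…,n}: g_k depends on z only through its k-th row (g_k(t,y,z) = g_k(t,y,z′) whenever z_k = z′_k); and for all t ∈ [0,T], λ ∈ [0,1], y¹, y² ∈ ℝⁿ, all δ ∈ ℝⁿ with δ ≥ 0 and δ_k = 0, and all z, z¹, z² ∈ ℝ^{n×d} with z_k = λz¹_k + (1−λ)z²_k: g_k(t, λy¹ + (1−λ)y² − δ, z) ≤ λ·g_k(t,y¹,z¹) + (1−λ)·g_k(t,y²,z²). (This is the deterministic core of the theorem that the multidimensional dynamic g-risk measure is nonincreasing and convex if and only if g is quasi-monotone increasingly convex.) -/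

import Mathlib

/-! Testing (a) at `y = δ - ε e_k` with `δ ≥ 0`, `δ_k = 0`, gives `y⁻ = ε e_k` and `y⁺ = δ`, and
only the `k`-th row survives in the sum; when `z_k = λ z¹_k + (1 - λ) z²_k` condition (a) becomes
`-4 ε · (convexity gap of g_k) ≤ C ε²`, and `ε → 0` yields the inequality of (b). Its case
`λ = 1`, `δ = 0`, read in both directions, says that `g_k` sees `z` only through `z_k`.

Conversely, (a) is checked coordinate by coordinate. Where `y_i < 0`, replace the `i`-th row of
`z` by `λ z¹_i + (1 - λ) z²_i`, which changes `g_i` by at most `L r_i` with `r_i` the row distance;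
the inequality of (b) with `δ = y⁺` then bounds the gap below by `-L r_i`, and
`4 y_i⁻ L r_i ≤ 2 r_i² + 2 L² (y_i⁻)²` finishes. -/

open scoped RealInnerProductSpace

noncomputable section

/-- `ℝⁿ` with the Euclidean norm. -/
abbrev Vec (n : ℕ) := EuclideanSpace ℝ (Fin n)

/-- Real `n × d` matrices with the Frobenius norm. -/
abbrev Mat (n d : ℕ) := EuclideanSpace ℝ (Fin n × Fin d)

/-- The `k`-th row of a matrix. -/
def row {n d : ℕ} (z : Mat n d) (k : Fin n) : Vec d := WithLp.toLp 2 (fun j => z (k, j))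

/-- Componentwise positive part. -/
def pos {n : ℕ} (x : Vec n) : Vec n := WithLp.toLp 2 (fun i => max (x i) 0)

/-- Componentwise negative part. -/
def neg {n : ℕ} (x : Vec n) : Vec n := WithLp.toLp 2 (fun i => max (-(x i)) 0)

/-- A generator is uniformly Lipschitz on `[0,T]`. -/
def UniformlyLipschitz {n d : ℕ} (T : ℝ)
    (g : ℝ → Vec n → Mat n d → Vec n) : Prop :=
  ∃ L : ℝ, 0 ≤ L ∧ ∀ t ∈ Set.Icc (0:ℝ) T, ∀ y y' : Vec n, ∀ z z' : Mat n d,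
    ‖g t y z - g t y' z'‖ ≤ L * (‖y - y'‖ + ‖z - z'‖)

section Coordinates

variable {n d : ℕ}

def updateRow (z : Mat n d) (k : Fin n) (v : Vec d) : Mat n d :=
  WithLp.toLp 2 fun p => if p.1 = k then v p.2 else z p

@[simp]
lemma row_updateRow_self (z : Mat n d) (k : Fin n) (v : Vec d) :
    row (updateRow z k v) k = v := by
  ext j
  simp [row, updateRow]

lemma norm_sub_updateRow (z : Mat n d) (k : Fin n) (v : Vec d) :
    ‖z - updateRow z k v‖ = ‖row z k - v‖ := by
  refine (sq_eq_sq₀ (norm_nonneg _) (norm_nonneg _)).1 ?_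
  rw [EuclideanSpace.real_norm_sq_eq, EuclideanSpace.real_norm_sq_eq, Fintype.sum_prod_type,
    Finset.sum_eq_single k]
  · simp [updateRow, row]
  · intro i _ hik
    simp [updateRow, hik]
  · simp

variable {δ : Vec n} {k : Fin n} {ε : ℝ}

lemma neg_sub_single (hδ : ∀ i, 0 ≤ δ i) (hδk : δ k = 0) (hε : 0 < ε) :
    neg (δ - EuclideanSpace.single k ε) = EuclideanSpace.single k ε := by
  ext i
  by_cases hik : i = k
  · subst hik
    simp [neg, hδk, hε.le]
  · simp [neg, hik, hδ i]

lemma pos_sub_single (hδ : ∀ i, 0 ≤ δ i) (hδk : δ k = 0) (hε : 0 < ε) :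
    pos (δ - EuclideanSpace.single k ε) = δ := by
  ext i
  by_cases hik : i = k
  · subst hik
    simp [pos, hδk, hε.le]
  · simp [pos, hik, hδ i]

lemma sub_single_apply_neg_iff (hδ : ∀ i, 0 ≤ δ i) (hδk : δ k = 0) (hε : 0 < ε) (i : Fin n) :
    (δ - EuclideanSpace.single k ε) i < 0 ↔ i = k := by
  by_cases hik : i = k
  · subst hik
    simp [hδk, hε]
  · simp [hik, hδ i]

end Coordinates

lemma nonneg_of_forall_pos_neg_mul_le_mul_sq {B C : ℝ} (h : ∀ ε > 0, -(ε * B) ≤ C * ε ^ 2) :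
    0 ≤ B := by
  by_contra! hB
  have hε : 0 < -B / (|C| + 1) := div_pos (by linarith) (by positivity)
  have hεB : (|C| + 1) * (-B / (|C| + 1)) = -B := mul_div_cancel₀ _ (by positivity)
  nlinarith [h _ hε, le_abs_self C, mul_pos hε hε]

section Conditions

variable {n d : ℕ}

def ConvexityBound (T : ℝ) (g : ℝ → Vec n → Mat n d → Vec n) (C : ℝ) : Prop :=
  ∀ t ∈ Set.Icc (0:ℝ) T, ∀ lam ∈ Set.Icc (0:ℝ) 1, ∀ y y₁ y₂ : Vec n, ∀ z z₁ z₂ : Mat n d,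
    -4 * ⟪neg y, lam • g t y₁ z₁ + (1 - lam) • g t y₂ z₂
        - g t (lam • y₁ + (1 - lam) • y₂ - pos y) z⟫ ≤
      2 * ∑ k : Fin n, (if y k < 0 then (1:ℝ) else 0) *
          ‖lam • row z₁ k + (1 - lam) • row z₂ k - row z k‖ ^ 2
        + C * ‖neg y‖ ^ 2

def DependsOnlyOnRow (T : ℝ) (g : ℝ → Vec n → Mat n d → Vec n) (k : Fin n) : Prop :=
  ∀ t ∈ Set.Icc (0:ℝ) T, ∀ y : Vec n, ∀ z z' : Mat n d,
    row z k = row z' k → g t y z k = g t y z' k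

def QuasiMonotoneConvexAt (T : ℝ) (g : ℝ → Vec n → Mat n d → Vec n) (k : Fin n) : Prop :=
  ∀ t ∈ Set.Icc (0:ℝ) T, ∀ lam ∈ Set.Icc (0:ℝ) 1, ∀ y₁ y₂ δ : Vec n,
    (∀ i, 0 ≤ δ i) → δ k = 0 →
    ∀ z z₁ z₂ : Mat n d, row z k = lam • row z₁ k + (1 - lam) • row z₂ k →
      g t (lam • y₁ + (1 - lam) • y₂ - δ) z k ≤ lam * g t y₁ z₁ k + (1 - lam) * g t y₂ z₂ k

variable {T : ℝ} {g : ℝ → Vec n → Mat n d → Vec n}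

lemma quasiMonotoneConvexAt_of_convexityBound {C : ℝ} (hA : ConvexityBound T g C) (k : Fin n) :
    QuasiMonotoneConvexAt T g k := by
  intro t ht lam hlam y₁ y₂ δ hδ hδk z z₁ z₂ hrow
  suffices h : ∀ ε > 0, -(ε * (lam * g t y₁ z₁ k + (1 - lam) * g t y₂ z₂ k
      - g t (lam • y₁ + (1 - lam) • y₂ - δ) z k)) ≤ C / 4 * ε ^ 2 by
    linarith [nonneg_of_forall_pos_neg_mul_le_mul_sq h]
  intro ε hε
  have hsum : ∑ i : Fin n, (if (δ - EuclideanSpace.single k ε) i < 0 then (1:ℝ) else 0) *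
      ‖lam • row z₁ i + (1 - lam) • row z₂ i - row z i‖ ^ 2 = 0 := by
    refine Finset.sum_eq_zero fun i _ => ?_
    simp only [sub_single_apply_neg_iff hδ hδk hε]
    split_ifs with hik
    · subst hik
      simp [hrow]
    · simp
  have h := hA t ht lam hlam (δ - EuclideanSpace.single k ε) y₁ y₂ z z₁ z₂
  rw [neg_sub_single hδ hδk hε, pos_sub_single hδ hδk hε, hsum,
    EuclideanSpace.inner_single_left, PiLp.norm_single] at h
  simp only [PiLp.sub_apply, PiLp.add_apply, PiLp.smul_apply, smul_eq_mul, Real.norm_eq_abs,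
    sq_abs, starRingEnd_apply, star_trivial] at h
  linarith

lemma dependsOnlyOnRow_of_quasiMonotoneConvexAt {k : Fin n} (h : QuasiMonotoneConvexAt T g k) :
    DependsOnlyOnRow T g k := by
  have hle : ∀ t ∈ Set.Icc (0:ℝ) T, ∀ y : Vec n, ∀ z z' : Mat n d,
      row z k = row z' k → g t y z k ≤ g t y z' k := by
    intro t ht y z z' hz
    simpa using h t ht 1 ⟨zero_le_one, le_rfl⟩ y y 0 (fun _ => le_rfl) rfl z z' z' (by simp [hz])
  exact fun t ht y z z' hz => (hle t ht y z z' hz).antisymm (hle t ht y z' z hz.symm)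

variable {L : ℝ}

lemma neg_mul_norm_le_of_quasiMonotoneConvexAt
    (hL : ∀ t ∈ Set.Icc (0:ℝ) T, ∀ y y' : Vec n, ∀ z z' : Mat n d,
      ‖g t y z - g t y' z'‖ ≤ L * (‖y - y'‖ + ‖z - z'‖))
    {k : Fin n} (h : QuasiMonotoneConvexAt T g k)
    {t : ℝ} (ht : t ∈ Set.Icc (0:ℝ) T) {lam : ℝ} (hlam : lam ∈ Set.Icc (0:ℝ) 1)
    (y₁ y₂ : Vec n) {δ : Vec n} (hδ : ∀ i, 0 ≤ δ i) (hδk : δ k = 0) (z z₁ z₂ : Mat n d) :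
    -(L * ‖lam • row z₁ k + (1 - lam) • row z₂ k - row z k‖) ≤
      lam * g t y₁ z₁ k + (1 - lam) * g t y₂ z₂ k - g t (lam • y₁ + (1 - lam) • y₂ - δ) z k := by
  set v := lam • row z₁ k + (1 - lam) • row z₂ k
  set w := lam • y₁ + (1 - lam) • y₂ - δ
  have hconv : g t w (updateRow z k v) k ≤ lam * g t y₁ z₁ k + (1 - lam) * g t y₂ z₂ k :=
    h t ht lam hlam y₁ y₂ δ hδ hδk (updateRow z k v) z₁ z₂ (row_updateRow_self ..)
  have hlip : |g t w z k - g t w (updateRow z k v) k| ≤ L * ‖v - row z k‖ :=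
    calc |g t w z k - g t w (updateRow z k v) k|
        = ‖(g t w z - g t w (updateRow z k v)) k‖ := by simp
      _ ≤ ‖g t w z - g t w (updateRow z k v)‖ := PiLp.norm_apply_le _ _
      _ ≤ L * (‖w - w‖ + ‖z - updateRow z k v‖) := hL t ht w w z _
      _ = L * ‖v - row z k‖ := by
        rw [sub_self, norm_zero, zero_add, norm_sub_updateRow, norm_sub_rev]
  linarith [(abs_le.1 hlip).2]

lemma convexityBound_of_quasiMonotoneConvexAt
    (hL : ∀ t ∈ Set.Icc (0:ℝ) T, ∀ y y' : Vec n, ∀ z z' : Mat n d,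
      ‖g t y z - g t y' z'‖ ≤ L * (‖y - y'‖ + ‖z - z'‖))
    (h : ∀ k, QuasiMonotoneConvexAt T g k) {C : ℝ} (hC : 2 * L ^ 2 ≤ C) :
    ConvexityBound T g C := by
  intro t ht lam hlam y y₁ y₂ z z₁ z₂
  set V := lam • g t y₁ z₁ + (1 - lam) • g t y₂ z₂ - g t (lam • y₁ + (1 - lam) • y₂ - pos y) z
  set r := fun i => ‖lam • row z₁ i + (1 - lam) • row z₂ i - row z i‖
  have hcoord : ∀ i, -4 * (neg y i * V i) ≤
      2 * ((if y i < 0 then (1:ℝ) else 0) * r i ^ 2) + C * neg y i ^ 2 := by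
    intro i
    by_cases hyi : y i < 0
    · have hV : -(L * r i) ≤ V i := by
        simpa [V] using neg_mul_norm_le_of_quasiMonotoneConvexAt hL (h i) ht hlam y₁ y₂
          (fun j => le_max_right (y j) 0) (by simp [pos, hyi.le]) z z₁ z₂
      have hneg : neg y i = -y i := by simp [neg, hyi.le]
      rw [if_pos hyi, hneg]
      nlinarith [sq_nonneg (r i - L * -y i), sq_nonneg (y i)]
    · have hneg : neg y i = 0 := by simpa [neg] using not_lt.1 hyi
      simp [hneg, hyi]
  calc -4 * ⟪neg y, V⟫ = ∑ i, -4 * (neg y i * V i) := by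
        simp [PiLp.inner_apply, Finset.mul_sum, mul_comm]
    _ ≤ ∑ i, (2 * ((if y i < 0 then (1:ℝ) else 0) * r i ^ 2) + C * neg y i ^ 2) :=
        Finset.sum_le_sum fun i _ => hcoord i
    _ = 2 * ∑ i, (if y i < 0 then (1:ℝ) else 0) * r i ^ 2 + C * ‖neg y‖ ^ 2 := by
        rw [Finset.sum_add_distrib, ← Finset.mul_sum, ← Finset.mul_sum,
          EuclideanSpace.real_norm_sq_eq]

end Conditions

theorem convexity_criterion_general
    {n d : ℕ} (T : ℝ)
    (g : ℝ → Vec n → Mat n d → Vec n) (hg : UniformlyLipschitz T g) :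
    (∃ C : ℝ, 0 < C ∧ ∀ t ∈ Set.Icc (0:ℝ) T, ∀ lam ∈ Set.Icc (0:ℝ) 1,
        ∀ y y₁ y₂ : Vec n, ∀ z z₁ z₂ : Mat n d,
        -4 * ⟪neg y, lam • g t y₁ z₁ + (1 - lam) • g t y₂ z₂
                - g t (lam • y₁ + (1 - lam) • y₂ - pos y) z⟫ ≤
          2 * ∑ k : Fin n, (if y k < 0 then (1:ℝ) else 0) *
              ‖lam • row z₁ k + (1 - lam) • row z₂ k - row z k‖ ^ 2
            + C * ‖neg y‖ ^ 2)
    ↔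
    (∀ k : Fin n,
      (∀ t ∈ Set.Icc (0:ℝ) T, ∀ y : Vec n, ∀ z z' : Mat n d,
        row z k = row z' k → g t y z k = g t y z' k) ∧
      (∀ t ∈ Set.Icc (0:ℝ) T, ∀ lam ∈ Set.Icc (0:ℝ) 1, ∀ y₁ y₂ δ : Vec n,
        (∀ i, 0 ≤ δ i) → δ k = 0 →
        ∀ z z₁ z₂ : Mat n d, row z k = lam • row z₁ k + (1 - lam) • row z₂ k →
          g t (lam • y₁ + (1 - lam) • y₂ - δ) z k ≤
            lam * g t y₁ z₁ k + (1 - lam) * g t y₂ z₂ k)) := by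
  constructor
  · rintro ⟨C, -, hA⟩ k
    have hk := quasiMonotoneConvexAt_of_convexityBound hA k
    exact ⟨dependsOnlyOnRow_of_quasiMonotoneConvexAt hk, hk⟩
  · intro hb
    obtain ⟨L, -, hL⟩ := hg
    exact ⟨2 * L ^ 2 + 1, by positivity,
      convexityBound_of_quasiMonotoneConvexAt hL (fun k => (hb k).2) (by linarith)⟩

/-- the deterministic core of the theorem that the multidimensional dynamic
`g`-risk measure is nonincreasing and convex iff `g` is quasi-monotone increasingly
convex. -/
theorem convexity_criterion
    {n d : ℕ} (hn : 0 < n) (hd : 0 < d) (T : ℝ) (hT : 0 < T)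
    (g : ℝ → Vec n → Mat n d → Vec n) (hg : UniformlyLipschitz T g) :
    (∃ C : ℝ, 0 < C ∧ ∀ t ∈ Set.Icc (0:ℝ) T, ∀ lam ∈ Set.Icc (0:ℝ) 1,
        ∀ y y₁ y₂ : Vec n, ∀ z z₁ z₂ : Mat n d,
        -4 * ⟪neg y, lam • g t y₁ z₁ + (1 - lam) • g t y₂ z₂
                - g t (lam • y₁ + (1 - lam) • y₂ - pos y) z⟫ ≤
          2 * ∑ k : Fin n, (if y k < 0 then (1:ℝ) else 0) *
              ‖lam • row z₁ k + (1 - lam) • row z₂ k - row z k‖ ^ 2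
            + C * ‖neg y‖ ^ 2)
    ↔
    (∀ k : Fin n,
      (∀ t ∈ Set.Icc (0:ℝ) T, ∀ y : Vec n, ∀ z z' : Mat n d,
        row z k = row z' k → g t y z k = g t y z' k) ∧
      (∀ t ∈ Set.Icc (0:ℝ) T, ∀ lam ∈ Set.Icc (0:ℝ) 1, ∀ y₁ y₂ δ : Vec n,
        (∀ i, 0 ≤ δ i) → δ k = 0 →
        ∀ z z₁ z₂ : Mat n d, row z k = lam • row z₁ k + (1 - lam) • row z₂ k →
          g t (lam • y₁ + (1 - lam) • y₂ - δ) z k ≤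
            lam * g t y₁ z₁ k + (1 - lam) * g t y₂ z₂ k)) :=
  convexity_criterion_general T g hg
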